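/- Let 0 < r₀ < r₁ and let (A, w) be an EYM solution on (r₀, r₁). If lim inf_{r → r₀⁺} A(r) > 0, then w(r) converges in the extended real numbers as r → r₀⁺; that is, lim inf_{r → r₀⁺} w(r) = lim sup_{r → r₀⁺} w(r). -/

import Mathlib

open Filter Topology Set

/-- The quantity Φ(r) = 1 − A(r) − (1 − w(r)²)²/r² − Λ·r². -/
noncomputable def Phi (Λ : ℝ) (A w : ℝ → ℝ) (r : ℝ) : ℝ :=
  1 - A r - (1 - (w r) ^ 2) ^ 2 / r ^ 2 - Λ * r ^ 2

/-- `(A, w)` is a static spherically symmetric Einstein SU(2)-Yang–Mills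
solution with cosmological constant `Λ` on the set `I`. -/
def IsEYM (Λ : ℝ) (A w : ℝ → ℝ) (I : Set ℝ) : Prop :=
  (∀ r ∈ I, DifferentiableAt ℝ A r) ∧
  (∀ r ∈ I, DifferentiableAt ℝ w r) ∧
  (∀ r ∈ I, DifferentiableAt ℝ (deriv w) r) ∧
  (∀ r ∈ I, r * deriv A r + 2 * A r * (deriv w r) ^ 2 = Phi Λ A w r) ∧
  (∀ r ∈ I, r ^ 2 * A r * deriv (deriv w) r + r * Phi Λ A w r * deriv w r
      + w r * (1 - (w r) ^ 2) = 0)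

/-!
The mass `m = r (1 - A) / 2 - Λ r³ / 6` satisfies `m' = A w'² + (1 - w²)² / (2 r²)`, so it is
nondecreasing while `A ≥ 0` and tends, as `r → r₀⁺`, to a finite limit or to `-∞`.

If the limit is finite and `A ≥ c > 0`, then `m + w + r / (4 c)` is nondecreasing as well (its
derivative is at least `(2 c w' + 1)² / (4 c)`), so it has a limit in `[-∞, ∞)`, and so does `w`.

If `m → -∞`, then `A → ∞`. Suppose `w` oscillates. At a local maximum the second field equation
gives `w (1 - w²) ≥ 0`, so `limsup w ≤ 1` and, applied to `-w`, `liminf w ≥ -1`. Take a local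
maximum `s₁` close to `r₀`. As `A` is large, `w'' > 0` where `w' = 1` and `w'' < 0` where
`w' = -1`, so `|w'| ≤ 1` on `(r₀, s₁]`. Then `u = r² A w'` satisfies
`u' = 2 r A w' (1 - w'²) - w (1 - w²)`, so `|u'| ≤ (2 / r₀) |u| + 6`, and Grönwall's inequality
from `u(s₁) = 0` bounds `u`, hence `m'`, on `(r₀, s₁)`: `m` stays bounded, a contradiction.
-/

theorem monotoneOn_Ioo_of_hasDerivAt_nonneg {f f' : ℝ → ℝ} {a b : ℝ}
    (hf : ∀ x ∈ Ioo a b, HasDerivAt f (f' x) x) (hf' : ∀ x ∈ Ioo a b, 0 ≤ f' x) :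
    MonotoneOn f (Ioo a b) :=
  monotoneOn_of_hasDerivWithinAt_nonneg (convex_Ioo a b)
    (fun x hx => (hf x hx).continuousAt.continuousWithinAt)
    (fun x hx => by rw [interior_Ioo] at hx ⊢; exact (hf x hx).hasDerivWithinAt)
    (fun x hx => by rw [interior_Ioo] at hx; exact hf' x hx)

theorem MonotoneOn.tendsto_nhdsGT_atBot_or_nhds {f : ℝ → ℝ} {a b : ℝ} (hab : a < b)
    (hf : MonotoneOn f (Ioo a b)) :
    Tendsto f (𝓝[>] a) atBot ∨ ∃ L, Tendsto f (𝓝[>] a) (𝓝 L) := by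
  by_cases hbdd : BddBelow (f '' Ioo a b)
  · exact .inr ⟨_, hf.tendsto_nhdsWithin_Ioo_right (nonempty_Ioo.2 hab) hbdd⟩
  · refine .inl (tendsto_atBot.2 fun N => ?_)
    obtain ⟨_, ⟨p, hp, rfl⟩, hpN⟩ := not_bddBelow_iff.1 hbdd N
    filter_upwards [Ioo_mem_nhdsGT hp.1] with x hx
    exact (hf ⟨hx.1, hx.2.trans hp.2⟩ hp hx.2.le).trans hpN.le

theorem IsLocalMax.deriv_deriv_nonpos {f : ℝ → ℝ} {x : ℝ} (h : IsLocalMax f x)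
    (hf : ContinuousAt f x) : deriv (deriv f) x ≤ 0 := by
  by_contra! hpos
  have hmin := isLocalMin_of_deriv_deriv_pos hpos h.deriv_eq_zero hf
  have hconst : f =ᶠ[𝓝 x] fun _ => f x :=
    (h.and hmin).mono fun y hy => le_antisymm hy.1 hy.2
  have hderiv : deriv f =ᶠ[𝓝 x] fun _ => 0 :=
    hconst.eventuallyEq_nhds.mono fun y hy => by rw [hy.deriv_eq, deriv_const]
  rw [hderiv.deriv_eq, deriv_const] at hpos
  exact hpos.false

theorem exists_isLocalMax_gt_of_liminf_lt_of_lt_limsup {f : ℝ → ℝ} {a b β : ℝ} (hab : a < b)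
    (hf : ContinuousOn f (Ioo a b))
    (hlow : liminf (fun x => (f x : EReal)) (𝓝[>] a) < β)
    (hhigh : (β : EReal) < limsup (fun x => (f x : EReal)) (𝓝[>] a)) :
    ∃ c ∈ Ioo a b, IsLocalMax f c ∧ β < f c := by
  have hlow' : ∃ᶠ x in 𝓝[>] a, f x < β :=
    (frequently_lt_of_liminf_lt (by isBoundedDefault) hlow).mono fun x hx => by exact_mod_cast hx
  have hhigh' : ∃ᶠ x in 𝓝[>] a, β < f x :=
    (frequently_lt_of_lt_limsup (by isBoundedDefault) hhigh).mono fun x hx => by exact_mod_cast hx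
  obtain ⟨x₃, hf₃, hx₃⟩ := (hlow'.and_eventually (Ioo_mem_nhdsGT hab)).exists
  obtain ⟨x₂, hf₂, hx₂⟩ := (hhigh'.and_eventually (Ioo_mem_nhdsGT hx₃.1)).exists
  obtain ⟨x₁, hf₁, hx₁⟩ := (hlow'.and_eventually (Ioo_mem_nhdsGT hx₂.1)).exists
  have hsub : Icc x₁ x₃ ⊆ Ioo a b := Icc_subset_Ioo hx₁.1 hx₃.2
  obtain ⟨c, hc, hcmax⟩ := isCompact_Icc.exists_isMaxOn
    (nonempty_Icc.2 (hx₁.2.trans hx₂.2).le) (hf.mono hsub)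
  have hβc : β < f c := hf₂.trans_le (hcmax ⟨hx₁.2.le, hx₂.2.le⟩)
  have hc₁ : x₁ < c := hc.1.lt_of_ne (by rintro rfl; linarith)
  have hc₃ : c < x₃ := hc.2.lt_of_ne (by rintro rfl; linarith)
  exact ⟨c, hsub hc, hcmax.isLocalMax (Icc_mem_nhds hc₁ hc₃), hβc⟩

theorem image_le_of_right_le_of_deriv_pos {f f' : ℝ → ℝ} {a b K : ℝ}
    (hf : ∀ x ∈ Icc a b, HasDerivAt f (f' x) x) (hb : f b ≤ K)
    (hK : ∀ x ∈ Icc a b, f x = K → 0 < f' x) : ∀ x ∈ Icc a b, f x ≤ K := by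
  have hrefl : ∀ x ∈ Icc a b, a + b - x ∈ Icc a b := fun x hx =>
    ⟨by linarith [hx.2], by linarith [hx.1]⟩
  have hg : ∀ x ∈ Icc a b, HasDerivAt (fun t => f (a + b - t)) (f' (a + b - x) * -1) x :=
    fun x hx => (hf _ (hrefl x hx)).comp x ((hasDerivAt_id x).const_sub (a + b))
  intro x hx
  have := image_le_of_deriv_right_lt_deriv_boundary' (B := fun _ => K) (B' := fun _ => 0)
    (fun t ht => (hg t ht).continuousAt.continuousWithinAt)
    (fun t ht => (hg t (Ico_subset_Icc_self ht)).hasDerivWithinAt)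
    (by simpa using hb) continuousOn_const (fun _ _ => hasDerivWithinAt_const _ _ _)
    (fun t ht hft => by
      simpa using hK _ (hrefl t (Ico_subset_Icc_self ht)) hft) (hrefl x hx)
  simpa using this

theorem abs_le_gronwallBound_of_eq_zero_right {u u' : ℝ → ℝ} {a b K C : ℝ}
    (hu : ∀ x ∈ Icc a b, HasDerivAt u (u' x) x) (hb : u b = 0)
    (bound : ∀ x ∈ Icc a b, |u' x| ≤ K * |u x| + C) :
    ∀ x ∈ Icc a b, |u x| ≤ gronwallBound 0 K C (b - x) := by
  have hrefl : ∀ x ∈ Icc a b, a + b - x ∈ Icc a b := fun x hx =>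
    ⟨by linarith [hx.2], by linarith [hx.1]⟩
  have hg : ∀ x ∈ Icc a b, HasDerivAt (fun t => u (a + b - t)) (u' (a + b - x) * -1) x :=
    fun x hx => (hu _ (hrefl x hx)).comp x ((hasDerivAt_id x).const_sub (a + b))
  intro x hx
  have := norm_le_gronwallBound_of_norm_deriv_right_le (δ := 0)
    (fun t ht => (hg t ht).continuousAt.continuousWithinAt)
    (fun t ht => (hg t (Ico_subset_Icc_self ht)).hasDerivWithinAt)
    (by simp [hb]) (fun t ht => by simpa using bound _ (hrefl t (Ico_subset_Icc_self ht)))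
    _ (hrefl x hx)
  rwa [sub_sub_cancel, add_sub_assoc, add_sub_cancel_left] at this

/-- Defined so that `A = 1 - 2 m / r - Λ r² / 3`. -/
noncomputable def mass (Λ : ℝ) (A : ℝ → ℝ) (r : ℝ) : ℝ :=
  r / 2 - r * A r / 2 - Λ * r ^ 3 / 6

theorem tendsto_atTop_of_tendsto_mass_atBot {Λ a : ℝ} {A : ℝ → ℝ} (ha : 0 < a)
    (hm : Tendsto (mass Λ A) (𝓝[>] a) atBot) : Tendsto A (𝓝[>] a) atTop := by
  refine tendsto_atTop.2 fun N => ?_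
  filter_upwards [tendsto_atBot.1 hm (-(a + 1) * (|N| + |Λ| * (a + 1) ^ 2) / 2),
    Ioo_mem_nhdsGT (lt_add_one a)] with r hmr hr
  have hr0 : 0 < r := ha.trans hr.1
  have hA : A r = 1 + -2 * mass Λ A r / r - Λ * r ^ 2 / 3 := by
    unfold mass; field_simp; ring
  have hΛ : Λ * r ^ 2 ≤ |Λ| * (a + 1) ^ 2 := by
    calc Λ * r ^ 2 ≤ |Λ| * r ^ 2 := by gcongr; exact le_abs_self Λ
      _ ≤ |Λ| * (a + 1) ^ 2 := by gcongr; exact hr.2.le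
  have hmass : |N| + |Λ| * (a + 1) ^ 2 ≤ -2 * mass Λ A r / r := by
    rw [le_div_iff₀ hr0]
    nlinarith [mul_le_mul_of_nonneg_right hr.2.le
      (by positivity : (0 : ℝ) ≤ |N| + |Λ| * (a + 1) ^ 2)]
  rw [hA]
  linarith [le_abs_self N, (by positivity : (0 : ℝ) ≤ |Λ| * (a + 1) ^ 2)]

theorem abs_flux_deriv_le {a x A p W : ℝ} (ha : 0 < a) (hx : a ≤ x) (hA : 0 < A)
    (hp : |p| ≤ 1) (hW : |W| ≤ 2) :
    |2 * x * A * p * (1 - p ^ 2) - W * (1 - W ^ 2)| ≤ 2 / a * |x ^ 2 * A * p| + 6 := by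
  have hx0 : 0 < x := ha.trans_le hx
  have hp2 : |1 - p ^ 2| ≤ 1 := abs_le.2
    ⟨by nlinarith [sq_abs p, abs_nonneg p], by nlinarith [sq_nonneg p]⟩
  have hcubic : |W * (1 - W ^ 2)| ≤ 6 := by
    obtain ⟨h1, h2⟩ := abs_le.1 hW
    exact abs_le.2 ⟨by nlinarith [mul_nonneg (sub_nonneg.2 h2) (sq_nonneg (W + 1))],
      by nlinarith [mul_nonneg (neg_le_iff_add_nonneg.1 h1) (sq_nonneg (W - 1))]⟩
  have hflux : |2 * x * A * p * (1 - p ^ 2)| ≤ 2 / a * |x ^ 2 * A * p| := by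
    have e1 : |2 * x * A * p * (1 - p ^ 2)| = 2 * x * A * (|p| * |1 - p ^ 2|) := by
      rw [show 2 * x * A * p * (1 - p ^ 2) = (2 * x * A) * (p * (1 - p ^ 2)) by ring,
        abs_mul (2 * x * A), abs_mul p, abs_of_pos (by positivity : (0 : ℝ) < 2 * x * A)]
    have e2 : |x ^ 2 * A * p| = x ^ 2 * A * |p| := by
      rw [abs_mul, abs_of_pos (by positivity : (0 : ℝ) < x ^ 2 * A)]
    rw [e1, e2, div_mul_eq_mul_div, le_div_iff₀ ha]
    calc 2 * x * A * (|p| * |1 - p ^ 2|) * a ≤ 2 * x * A * (|p| * 1) * x := by gcongr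
      _ = 2 * (x ^ 2 * A * |p|) := by ring
  calc _ ≤ |2 * x * A * p * (1 - p ^ 2)| + |W * (1 - W ^ 2)| := abs_sub _ _
    _ ≤ _ := add_le_add hflux hcubic

theorem deriv_mass_le_of_abs_flux_le {a r A p W B : ℝ} (ha : 0 < a) (hr : a ≤ r) (hA : 0 ≤ A)
    (hp : |p| ≤ 1) (hW : |W| ≤ 2) (hu : |r ^ 2 * A * p| ≤ B) :
    A * p ^ 2 + (1 - W ^ 2) ^ 2 / (2 * r ^ 2) ≤ (B + 9 / 2) / a ^ 2 := by
  have hr0 : 0 < r := ha.trans_le hr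
  have ha2 : a ^ 2 ≤ r ^ 2 := pow_le_pow_left₀ ha.le hr 2
  have hkin : A * p ^ 2 * a ^ 2 ≤ B := calc
    A * p ^ 2 * a ^ 2 ≤ A * p ^ 2 * r ^ 2 := by gcongr
    _ = |r ^ 2 * A * p| * |p| := by
      rw [← abs_mul, show r ^ 2 * A * p * p = A * p ^ 2 * r ^ 2 by ring,
        abs_of_nonneg (by positivity)]
    _ ≤ B := by nlinarith [mul_le_mul_of_nonneg_left hp (abs_nonneg (r ^ 2 * A * p))]
  have hpot : (1 - W ^ 2) ^ 2 / (2 * r ^ 2) ≤ 9 / 2 / a ^ 2 := by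
    rw [div_div, div_le_div_iff₀ (by positivity) (by positivity)]
    have hW4 : W ^ 2 ≤ 4 := by nlinarith [abs_le.1 hW]
    have h9 : (1 - W ^ 2) ^ 2 ≤ 9 := by
      nlinarith [mul_nonneg (by positivity : (0 : ℝ) ≤ W ^ 2 + 2) (sub_nonneg.2 hW4)]
    exact mul_le_mul h9 (by linarith) (by positivity) (by norm_num)
  rw [← le_div_iff₀ (by positivity)] at hkin
  calc _ ≤ B / a ^ 2 + 9 / 2 / a ^ 2 := add_le_add hkin hpot
    _ = _ := by rw [← add_div]

namespace IsEYM

variable {Λ : ℝ} {A w : ℝ → ℝ} {I J : Set ℝ}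

theorem mono (h : IsEYM Λ A w J) (hIJ : I ⊆ J) : IsEYM Λ A w I :=
  ⟨fun r hr => h.1 r (hIJ hr), fun r hr => h.2.1 r (hIJ hr), fun r hr => h.2.2.1 r (hIJ hr),
    fun r hr => h.2.2.2.1 r (hIJ hr), fun r hr => h.2.2.2.2 r (hIJ hr)⟩

theorem continuousOn (h : IsEYM Λ A w I) : ContinuousOn w I :=
  fun r hr => (h.2.1 r hr).continuousAt.continuousWithinAt

theorem neg (h : IsEYM Λ A w I) : IsEYM Λ A (-w) I := by
  obtain ⟨hA, hw, hw', hAeq, hweq⟩ := h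
  have hd : deriv (-w) = -deriv w := deriv.neg'
  have hΦ : Phi Λ A (-w) = Phi Λ A w := funext fun r => by simp [Phi]
  refine ⟨hA, fun r hr => (hw r hr).neg, fun r hr => hd ▸ (hw' r hr).neg, fun r hr => ?_,
    fun r hr => ?_⟩
  · simpa [hd, hΦ] using hAeq r hr
  · rw [hd, hΦ, show deriv (-deriv w) = -deriv (deriv w) from deriv.neg']
    simp only [Pi.neg_apply]
    linear_combination -hweq r hr

theorem hasDerivAt_mass (h : IsEYM Λ A w I) {r : ℝ} (hr : r ∈ I) :
    HasDerivAt (mass Λ A) (A r * deriv w r ^ 2 + (1 - w r ^ 2) ^ 2 / (2 * r ^ 2)) r := by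
  have hd : HasDerivAt (mass Λ A)
      (1 / 2 - (1 * A r + r * deriv A r) / 2 - Λ * (↑3 * r ^ 2) / 6) r :=
    (((hasDerivAt_id r).div_const 2).sub
      (((hasDerivAt_id r).mul (h.1 r hr).hasDerivAt).div_const 2)).sub
      (((hasDerivAt_pow 3 r).const_mul Λ).div_const 6)
  convert hd using 1
  have hAeq := h.2.2.2.1 r hr
  rw [Phi] at hAeq
  linear_combination (1 / 2 : ℝ) * hAeq

theorem hasDerivAt_flux (h : IsEYM Λ A w I) {r : ℝ} (hr : r ∈ I) :
    HasDerivAt (fun t => t ^ 2 * A t * deriv w t)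
      (2 * r * A r * deriv w r * (1 - deriv w r ^ 2) - w r * (1 - w r ^ 2)) r := by
  have hd : HasDerivAt (fun t => t ^ 2 * A t * deriv w t)
      ((↑2 * r ^ 1 * A r + r ^ 2 * deriv A r) * deriv w r + r ^ 2 * A r * deriv (deriv w) r) r :=
    ((hasDerivAt_pow 2 r).mul (h.1 r hr).hasDerivAt).mul (h.2.2.1 r hr).hasDerivAt
  convert hd using 1
  linear_combination (-(r * deriv w r)) * h.2.2.2.1 r hr - h.2.2.2.2 r hr

theorem mul_one_sub_sq_nonneg_of_isLocalMax (h : IsEYM Λ A w I) {r : ℝ} (hr : r ∈ I)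
    (hA : 0 < A r) (hmax : IsLocalMax w r) : 0 ≤ w r * (1 - w r ^ 2) := by
  have hw'' := hmax.deriv_deriv_nonpos (h.2.1 r hr).continuousAt
  have hweq := h.2.2.2.2 r hr
  rw [hmax.deriv_eq_zero] at hweq
  nlinarith [mul_nonneg (mul_nonneg (sq_nonneg r) hA.le) (neg_nonneg.2 hw'')]

theorem deriv_deriv_pos (h : IsEYM Λ A w I) {r : ℝ} (hr : r ∈ I) (hr0 : 0 < r)
    (hA : 2 * (1 + |Λ| * r ^ 2) ≤ A r) (hw : |w r| ≤ 2) (hw' : 20 < r * A r * deriv w r) :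
    0 < deriv (deriv w) r := by
  have hApos : 0 < A r := by nlinarith [abs_nonneg Λ, sq_nonneg r]
  have hΦ : Phi Λ A w r ≤ -(A r / 2) := by
    have : 0 ≤ (1 - w r ^ 2) ^ 2 / r ^ 2 := by positivity
    rw [Phi]; nlinarith [neg_abs_le Λ, sq_nonneg r]
  have hW : w r * (1 - w r ^ 2) ≤ 6 := by
    obtain ⟨h1, -⟩ := abs_le.1 hw
    nlinarith [mul_nonneg (neg_le_iff_add_nonneg.1 h1) (sq_nonneg (w r - 1))]
  have hw'pos : 0 < deriv w r := by
    by_contra! hneg; nlinarith [mul_pos hr0 hApos]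
  have hweq := h.2.2.2.2 r hr
  have : 0 < r ^ 2 * A r * deriv (deriv w) r := by
    nlinarith [mul_le_mul_of_nonneg_right hΦ (mul_pos hr0 hw'pos).le]
  exact pos_of_mul_pos_right this (by positivity)

variable {a b : ℝ}

theorem monotoneOn_mass (h : IsEYM Λ A w (Ioo a b)) (hA : ∀ r ∈ Ioo a b, 0 ≤ A r) :
    MonotoneOn (mass Λ A) (Ioo a b) :=
  monotoneOn_Ioo_of_hasDerivAt_nonneg (fun r hr => h.hasDerivAt_mass hr)
    fun r hr => add_nonneg (mul_nonneg (hA r hr) (sq_nonneg _)) (by positivity)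

theorem monotoneOn_mass_add (h : IsEYM Λ A w (Ioo a b)) {c : ℝ} (hc : 0 < c)
    (hA : ∀ r ∈ Ioo a b, c ≤ A r) :
    MonotoneOn (fun r => mass Λ A r + w r + r / (4 * c)) (Ioo a b) := by
  refine monotoneOn_Ioo_of_hasDerivAt_nonneg (fun r hr => ((h.hasDerivAt_mass hr).add
    (h.2.1 r hr).hasDerivAt).add ((hasDerivAt_id' r).div_const (4 * c))) fun r hr => ?_
  have hQ : 0 ≤ (1 - w r ^ 2) ^ 2 / (2 * r ^ 2) := by positivity
  have hsq : 0 ≤ c * deriv w r ^ 2 + deriv w r + 1 / (4 * c) := by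
    have : c * deriv w r ^ 2 + deriv w r + 1 / (4 * c) = (2 * c * deriv w r + 1) ^ 2 / (4 * c) := by
      field_simp; ring
    rw [this]; positivity
  nlinarith [mul_le_mul_of_nonneg_right (hA r hr) (sq_nonneg (deriv w r))]

theorem exists_tendsto_of_tendsto_mass (h : IsEYM Λ A w (Ioo a b)) (hab : a < b) {c : ℝ}
    (hc : 0 < c) (hA : ∀ r ∈ Ioo a b, c ≤ A r) {M : ℝ} (hM : Tendsto (mass Λ A) (𝓝[>] a) (𝓝 M)) :
    ∃ L : EReal, Tendsto (fun r => (w r : EReal)) (𝓝[>] a) (𝓝 L) := by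
  have hrest : Tendsto (fun r => -(mass Λ A r + r / (4 * c))) (𝓝[>] a) (𝓝 (-(M + a / (4 * c)))) :=
    (hM.add ((tendsto_id.mono_left nhdsWithin_le_nhds).div_const _)).neg
  have hw : ∀ r, mass Λ A r + w r + r / (4 * c) + -(mass Λ A r + r / (4 * c)) = w r :=
    fun r => by ring
  rcases (h.monotoneOn_mass_add hc hA).tendsto_nhdsGT_atBot_or_nhds hab with hF | ⟨L, hF⟩
  · exact ⟨⊥, EReal.tendsto_coe_nhds_bot_iff.2 ((hF.atBot_add hrest).congr hw)⟩
  · exact ⟨_, EReal.tendsto_coe.2 ((hF.add hrest).congr hw)⟩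

theorem limsup_le_one (h : IsEYM Λ A w (Ioo a b)) (hab : a < b) (hA : ∀ r ∈ Ioo a b, 0 < A r)
    (hosc : liminf (fun r => (w r : EReal)) (𝓝[>] a) < limsup (fun r => (w r : EReal)) (𝓝[>] a)) :
    limsup (fun r => (w r : EReal)) (𝓝[>] a) ≤ 1 := by
  by_contra! hgt
  obtain ⟨β, hβlow, hβhigh⟩ := EReal.exists_between_coe_real (max_lt hosc hgt)
  obtain ⟨c, hc, hmax, hβc⟩ := exists_isLocalMax_gt_of_liminf_lt_of_lt_limsup hab h.continuousOn
    ((le_max_left _ _).trans_lt hβlow) hβhigh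
  have h1β : (1 : ℝ) < β := by exact_mod_cast (le_max_right _ _).trans_lt hβlow
  have hsign := h.mul_one_sub_sq_nonneg_of_isLocalMax hc (hA c hc) hmax
  nlinarith [mul_pos (by linarith : (0 : ℝ) < w c) (by linarith : (0 : ℝ) < w c - 1)]

theorem eventually_abs_le_two (h : IsEYM Λ A w (Ioo a b)) (hab : a < b)
    (hA : ∀ r ∈ Ioo a b, 0 < A r)
    (hosc : liminf (fun r => (w r : EReal)) (𝓝[>] a) < limsup (fun r => (w r : EReal)) (𝓝[>] a)) :
    ∀ᶠ r in 𝓝[>] a, |w r| ≤ 2 := by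
  have hlt : ∀ {v : ℝ → ℝ}, IsEYM Λ A v (Ioo a b) →
      liminf (fun r => (v r : EReal)) (𝓝[>] a) < limsup (fun r => (v r : EReal)) (𝓝[>] a) →
      ∀ᶠ r in 𝓝[>] a, v r < 2 := fun hv hvosc =>
    (eventually_lt_of_limsup_lt ((hv.limsup_le_one hab hA hvosc).trans_lt
      (show (1 : EReal) < (2 : ℝ) by exact_mod_cast one_lt_two))).mono
      fun r hr => EReal.coe_lt_coe_iff.1 hr
  have hnegosc : liminf (fun r => ((-w) r : EReal)) (𝓝[>] a)
      < limsup (fun r => ((-w) r : EReal)) (𝓝[>] a) := by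
    have : (fun r => ((-w) r : EReal)) = -fun r => (w r : EReal) := funext fun r => EReal.coe_neg _
    rw [this, EReal.liminf_neg, EReal.limsup_neg]
    exact EReal.neg_lt_neg_iff.2 hosc
  filter_upwards [hlt h hosc, hlt h.neg hnegosc] with r hr hr'
  exact abs_le.2 ⟨by simp only [Pi.neg_apply] at hr'; linarith, hr.le⟩

theorem deriv_le_one (h : IsEYM Λ A w (Ioo a b)) (ha : 0 < a)
    (hA : ∀ r ∈ Ioo a b, 2 * (1 + |Λ| * r ^ 2) + 20 / a ≤ A r) (hw : ∀ r ∈ Ioo a b, |w r| ≤ 2)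
    {s : ℝ} (hs : s ∈ Ioo a b) (hs' : deriv w s ≤ 1) : ∀ r ∈ Ioc a s, deriv w r ≤ 1 := by
  intro r hr
  have hsub : Icc r s ⊆ Ioo a b := Icc_subset_Ioo hr.1 hs.2
  refine image_le_of_right_le_of_deriv_pos (fun x hx => (h.2.2.1 x (hsub hx)).hasDerivAt) hs'
    (fun x hx hx1 => ?_) r (left_mem_Icc.2 hr.2)
  replace hx := hsub hx
  have hx0 : 0 < x := ha.trans hx.1
  have hAx : 20 / a < A x := by
    have := hA x hx; have : 0 < 2 * (1 + |Λ| * x ^ 2) := by positivity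
    linarith
  refine h.deriv_deriv_pos hx hx0 ((le_add_of_nonneg_right (by positivity)).trans (hA x hx))
    (hw x hx) ?_
  rw [hx1, mul_one]
  calc (20 : ℝ) = a * (20 / a) := by field_simp
    _ < x * A x := mul_lt_mul'' hx.1 hAx ha.le (by positivity)

theorem abs_deriv_le_one (h : IsEYM Λ A w (Ioo a b)) (ha : 0 < a)
    (hA : ∀ r ∈ Ioo a b, 2 * (1 + |Λ| * r ^ 2) + 20 / a ≤ A r) (hw : ∀ r ∈ Ioo a b, |w r| ≤ 2)
    {s : ℝ} (hs : s ∈ Ioo a b) (hs' : deriv w s = 0) : ∀ r ∈ Ioc a s, |deriv w r| ≤ 1 := by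
  intro r hr
  have hneg := h.neg.deriv_le_one ha hA (fun r hr => by simpa using hw r hr) hs
    (by simp [deriv.neg', hs']) r hr
  rw [deriv.neg'] at hneg
  exact abs_le.2 ⟨by linarith, h.deriv_le_one ha hA hw hs (hs'.trans_le zero_le_one) r hr⟩

theorem abs_flux_le (h : IsEYM Λ A w (Ioo a b)) (ha : 0 < a) (hA : ∀ r ∈ Ioo a b, 0 < A r)
    (hw : ∀ r ∈ Ioo a b, |w r| ≤ 2) {s : ℝ} (hs : s ∈ Ioo a b) (hs' : deriv w s = 0)
    (hw' : ∀ r ∈ Ioc a s, |deriv w r| ≤ 1) :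
    ∀ r ∈ Ioc a s, |r ^ 2 * A r * deriv w r| ≤ gronwallBound 0 (2 / a) 6 (s - a) := by
  intro r hr
  have hsub : Icc r s ⊆ Ioo a b := Icc_subset_Ioo hr.1 hs.2
  calc _ ≤ gronwallBound 0 (2 / a) 6 (s - r) :=
        abs_le_gronwallBound_of_eq_zero_right (fun x hx => h.hasDerivAt_flux (hsub hx))
          (by simp [hs']) (fun x hx => abs_flux_deriv_le ha (hr.1.trans_le hx.1).le
            (hA x (hsub hx)) (hw' x ⟨hr.1.trans_le hx.1, hx.2⟩) (hw x (hsub hx)))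
          r (left_mem_Icc.2 hr.2)
    _ ≤ _ := gronwallBound_mono le_rfl (by norm_num) (by positivity) (by linarith [hr.1])

theorem eventually_le_mass (h : IsEYM Λ A w (Ioo a b)) (ha : 0 < a) (hA : ∀ r ∈ Ioo a b, 0 < A r)
    (hw : ∀ r ∈ Ioo a b, |w r| ≤ 2) {s B : ℝ} (hs : s ∈ Ioo a b)
    (hw' : ∀ r ∈ Ioc a s, |deriv w r| ≤ 1) (hu : ∀ r ∈ Ioc a s, |r ^ 2 * A r * deriv w r| ≤ B) :
    ∃ C, ∀ᶠ r in 𝓝[>] a, C ≤ mass Λ A r := by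
  set M := (B + 9 / 2) / a ^ 2
  have hsub : Ioo a s ⊆ Ioo a b := Ioo_subset_Ioo_right hs.2.le
  have hderiv : ∀ r ∈ Ioo a s, A r * deriv w r ^ 2 + (1 - w r ^ 2) ^ 2 / (2 * r ^ 2) ≤ M :=
    fun r hr => deriv_mass_le_of_abs_flux_le ha hr.1.le (hA r (hsub hr)).le
      (hw' r ⟨hr.1, hr.2.le⟩) (hw r (hsub hr)) (hu r ⟨hr.1, hr.2.le⟩)
  have hmono : MonotoneOn (fun r => M * r - mass Λ A r) (Ioo a s) :=
    monotoneOn_Ioo_of_hasDerivAt_nonneg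
      (fun r hr => ((hasDerivAt_id' r).const_mul M).sub (h.hasDerivAt_mass (hsub hr)))
      fun r hr => by simpa using hderiv r hr
  obtain ⟨p, hp⟩ := nonempty_Ioo.2 hs.1
  refine ⟨mass Λ A p - M * (p - a), ?_⟩
  filter_upwards [Ioo_mem_nhdsGT hp.1] with r hr
  have := hmono ⟨hr.1, hr.2.trans hp.2⟩ hp hr.2.le
  have hM : 0 ≤ M := by
    have := (abs_nonneg _).trans (hu s ⟨hs.1, le_rfl⟩); positivity
  nlinarith [hr.1]

theorem liminf_eq_limsup_of_tendsto_mass_atBot (h : IsEYM Λ A w (Ioo a b)) (ha : 0 < a)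
    (hab : a < b) (hA : ∀ r ∈ Ioo a b, 0 < A r) (hm : Tendsto (mass Λ A) (𝓝[>] a) atBot) :
    liminf (fun r => (w r : EReal)) (𝓝[>] a) = limsup (fun r => (w r : EReal)) (𝓝[>] a) := by
  by_contra hne
  have hosc := lt_of_le_of_ne liminf_le_limsup hne
  have hev : ∀ᶠ r in 𝓝[>] a,
      (2 * (1 + |Λ| * r ^ 2) + 20 / a ≤ A r ∧ |w r| ≤ 2) ∧ r ∈ Ioo a b := by
    filter_upwards [(tendsto_atTop_of_tendsto_mass_atBot ha hm).eventually_ge_atTop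
      (2 * (1 + |Λ| * b ^ 2) + 20 / a), h.eventually_abs_le_two hab hA hosc,
      Ioo_mem_nhdsGT hab] with r hAr hwr hr
    refine ⟨⟨le_trans ?_ hAr, hwr⟩, hr⟩
    have := (ha.trans hr.1).le
    gcongr; exact hr.2.le
  obtain ⟨s, hs, hsub⟩ := mem_nhdsGT_iff_exists_Ioo_subset.1 hev
  have h' := h.mono fun r hr => (hsub hr).2
  obtain ⟨β, hβlow, hβhigh⟩ := EReal.exists_between_coe_real hosc
  obtain ⟨s₁, hs₁, hmax, -⟩ := exists_isLocalMax_gt_of_liminf_lt_of_lt_limsup hs h'.continuousOn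
    hβlow hβhigh
  have hw : ∀ r ∈ Ioo a s, |w r| ≤ 2 := fun r hr => (hsub hr).1.2
  have hw' := h'.abs_deriv_le_one ha (fun r hr => (hsub hr).1.1) hw hs₁ hmax.deriv_eq_zero
  have hApos : ∀ r ∈ Ioo a s, 0 < A r := fun r hr => hA r (hsub hr).2
  obtain ⟨C, hC⟩ := h'.eventually_le_mass ha hApos hw hs₁ hw'
    (h'.abs_flux_le ha hApos hw hs₁ hmax.deriv_eq_zero hw')
  obtain ⟨r, hCr, hrC⟩ := (hC.and (hm.eventually (eventually_lt_atBot C))).exists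
  exact (hCr.trans_lt hrC).false

end IsEYM

/-- if `liminf_{r→r₀⁺} A(r) > 0`, then `w` converges in the
extended reals as `r → r₀⁺`. -/
theorem stmt_5 (Λ r₀ r₁ : ℝ) (A w : ℝ → ℝ)
    (hr₀ : 0 < r₀) (hr₁ : r₀ < r₁)
    (hEYM : IsEYM Λ A w (Ioo r₀ r₁))
    (hA : 0 < Filter.liminf (fun r => (A r : EReal)) (𝓝[>] r₀)) :
    Filter.liminf (fun r => (w r : EReal)) (𝓝[>] r₀) =
      Filter.limsup (fun r => (w r : EReal)) (𝓝[>] r₀) := by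
  obtain ⟨c, hc, hcA⟩ := EReal.exists_between_coe_real hA
  have hev : ∀ᶠ r in 𝓝[>] r₀, c ≤ A r ∧ r ∈ Ioo r₀ r₁ := by
    filter_upwards [eventually_lt_of_lt_liminf hcA, Ioo_mem_nhdsGT hr₁] with r hr hr'
    exact ⟨EReal.coe_le_coe_iff.1 hr.le, hr'⟩
  obtain ⟨s, hs, hsub⟩ := mem_nhdsGT_iff_exists_Ioo_subset.1 hev
  have h := hEYM.mono fun r hr => (hsub hr).2
  have hc₀ : 0 < c := EReal.coe_pos.1 hc
  have hApos : ∀ r ∈ Ioo r₀ s, 0 < A r := fun r hr => hc₀.trans_le (hsub hr).1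
  rcases (h.monotoneOn_mass fun r hr => (hApos r hr).le).tendsto_nhdsGT_atBot_or_nhds hs with
    hm | ⟨M, hM⟩
  · exact h.liminf_eq_limsup_of_tendsto_mass_atBot hr₀ hs hApos hm
  · obtain ⟨L, hL⟩ := h.exists_tendsto_of_tendsto_mass hs hc₀ (fun r hr => (hsub hr).1) hM
    exact hL.liminf_eq.trans hL.limsup_eq.symm
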